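/- Let α ∈ [0,1] be a real number, let n = 2^m for a positive integer m, and let Q_n = ⟨a, b | a^{2n} = e, b² = a^n, ab = ba^{−1}⟩ be the generalized quaternion (dicyclic) group of order 4n. Then for the power graph P(Q_n): (i) 4αn − 1 is an eigenvalue of A_α(P(Q_n)); (ii) 2αn − 1 is an eigenvalue whose eigenspace has dimension at least 2n − 3; (iii) 4α − 1 is an eigenvalue whose eigenspace has dimension at least n; (iv) 1 + 2α is an eigenvalue whose eigenspace has dimension at least n − 2. -/

import Mathlib

open Matrix Polynomial BigOperators

/-- The generalized adjacency matrix `A_α(G) = α·D(G) + (1−α)·A(G)`. -/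
noncomputable def Aalpha {V : Type*} [Fintype V] (G : SimpleGraph V) (α : ℝ) :
    Matrix V V ℝ :=
  letI := Classical.decEq V
  letI := Classical.decRel G.Adj
  α • Matrix.diagonal (fun v => (G.degree v : ℝ)) + (1 - α) • G.adjMatrix ℝ

/-- `μ` is an eigenvalue of the real matrix `M`. -/
def Matrix.IsEigenvalue {n : Type*} [Fintype n] (M : Matrix n n ℝ) (μ : ℝ) : Prop :=
  ∃ v : n → ℝ, v ≠ 0 ∧ M.mulVec v = μ • v

/-- The dimension of the eigenspace of a real matrix `M` for the value `μ`. -/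
noncomputable def eigMult {n : Type*} [Fintype n] (M : Matrix n n ℝ) (μ : ℝ) : ℕ :=
  letI := Classical.decEq n
  Module.finrank ℝ (Module.End.eigenspace (Matrix.toLin' M) μ)

/-- The joined union `G[G_1, …, G_n]`. -/
def joinedUnion {n : ℕ} (G : SimpleGraph (Fin n)) (V : Fin n → Type*)
    (Gs : ∀ i, SimpleGraph (V i)) : SimpleGraph (Σ i, V i) :=
  SimpleGraph.fromRel (fun x y =>
    if h : x.1 = y.1 then (Gs y.1).Adj (h ▸ x.2) y.2 else G.Adj x.1 y.1)

/-- The join `G ∇ H` of two graphs. -/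
def graphJoin {V W : Type*} (G : SimpleGraph V) (H : SimpleGraph W) :
    SimpleGraph (V ⊕ W) :=
  SimpleGraph.fromRel (fun x y =>
    match x, y with
    | Sum.inl a, Sum.inl b => G.Adj a b
    | Sum.inr a, Sum.inr b => H.Adj a b
    | _, _ => True)

/-- The disjoint union `G ∪ H` of two graphs. -/
def disjUnion {V W : Type*} (G : SimpleGraph V) (H : SimpleGraph W) :
    SimpleGraph (V ⊕ W) :=
  SimpleGraph.fromRel (fun x y =>
    match x, y with
    | Sum.inl a, Sum.inl b => G.Adj a b
    | Sum.inr a, Sum.inr b => H.Adj a b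
    | _, _ => False)

/-- Degree of a vertex (classical version). -/
noncomputable def gdegree {V : Type*} [Fintype V] (G : SimpleGraph V) (v : V) : ℕ :=
  letI := Classical.decEq V
  letI := Classical.decRel G.Adj
  G.degree v

/-- The power graph of a group. -/
def powerGraph (G : Type*) [Group G] : SimpleGraph G :=
  SimpleGraph.fromRel (fun x y => ∃ k : ℕ, 0 < k ∧ y = x ^ k)

/-!
For `n = 2 ^ m`, `⟨a⟩ ≅ ZMod (2n)` is a cyclic 2-group, whose subgroups form a chain, so the `a i`
form a clique of the power graph; each `xa i` has order 4 and is adjacent exactly to `a 0 = 1`,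
`a n` and `xa (n + i)`. Hence `a 0, a n` are adjacent twins of degree `4n - 1`, any two other `a i`
are adjacent twins of degree `2n - 1`, and every `xa i` has degree 3.

If `p, q` are adjacent twins of degree `d`, then `e_p - e_q` is an adjacency eigenvector for `-1`,
hence an `A_α`-eigenvector for `α d - (1 - α)`: this gives (i) and (ii). On vectors supported on the
`xa i` and summing to zero, the adjacency matrix acts as `e_{xa i} ↦ e_{xa (n + i)}`, because
`a 0` and `a n` see every `xa i`; eigenvectors of this involution give (iii) and (iv).
-/

open QuaternionGroup

theorem ZMod.exists_mul_eq_of_gcd_dvd {M : ℕ} [NeZero M] {i j : ZMod M}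
    (h : i.val.gcd M ∣ j.val) : ∃ c : ZMod M, c * i = j := by
  obtain ⟨t, ht⟩ := h
  refine ⟨t * i⁻¹, ?_⟩
  rw [mul_assoc, mul_comm i⁻¹, ZMod.mul_inv_eq_gcd, ← Nat.cast_mul, mul_comm, ← ht,
    ZMod.natCast_zmod_val]

theorem ZMod.exists_mul_eq_or_of_prime_pow {p r M : ℕ} (hp : p.Prime) (hM : M = p ^ r)
    (i j : ZMod M) : (∃ c : ZMod M, c * i = j) ∨ ∃ c : ZMod M, c * j = i := by
  subst hM
  have : NeZero (p ^ r) := ⟨pow_ne_zero r hp.ne_zero⟩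
  obtain ⟨s, -, hs⟩ := (Nat.dvd_prime_pow hp).mp (Nat.gcd_dvd_right i.val (p ^ r))
  obtain ⟨t, -, ht⟩ := (Nat.dvd_prime_pow hp).mp (Nat.gcd_dvd_right j.val (p ^ r))
  rcases le_total s t with hst | hts
  · refine .inl (exists_mul_eq_of_gcd_dvd (Nat.dvd_trans ?_ (Nat.gcd_dvd_left j.val (p ^ r))))
    rw [hs, ht]; exact Nat.pow_dvd_pow p hst
  · refine .inr (exists_mul_eq_of_gcd_dvd (Nat.dvd_trans ?_ (Nat.gcd_dvd_left i.val (p ^ r))))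
    rw [hs, ht]; exact Nat.pow_dvd_pow p hts

theorem linearIndependent_of_apply_eq_ite {ι V R : Type*} [Semiring R] [DecidableEq ι]
    {w : ι → V → R} (t : ι → V) (h : ∀ i j, w j (t i) = if i = j then 1 else 0) :
    LinearIndependent R w := by
  refine LinearIndependent.of_comp (LinearMap.funLeft R R t) ?_
  convert Pi.linearIndependent_single_one ι R
  ext i
  simp [LinearMap.funLeft, h, Pi.single_apply]

theorem card_le_eigMult {V ι : Type*} [Fintype V] [Fintype ι] {M : Matrix V V ℝ} {μ : ℝ}
    {w : ι → V → ℝ} (hw : ∀ i, M *ᵥ w i = μ • w i) (hli : LinearIndependent ℝ w) :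
    Fintype.card ι ≤ eigMult M μ := by
  classical
  unfold eigMult
  have hspan : Submodule.span ℝ (Set.range w) ≤ Module.End.eigenspace (toLin' M) μ := by
    rw [Submodule.span_le]
    rintro _ ⟨i, rfl⟩
    exact Module.End.mem_eigenspace_iff.2 (by rw [toLin'_apply, hw i])
  rw [← finrank_span_eq_card hli]
  exact Submodule.finrank_mono hspan

section Aalpha

variable {V : Type*} [Fintype V] [DecidableEq V] (G : SimpleGraph V) [DecidableRel G.Adj]

theorem Aalpha_eq (α : ℝ) :
    Aalpha G α = α • diagonal (fun v => (G.degree v : ℝ)) + (1 - α) • G.adjMatrix ℝ := by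
  unfold Aalpha
  congr!

variable {G}

theorem Aalpha_mulVec_eq_smul {α μ d : ℝ} {v : V → ℝ} (hv : G.adjMatrix ℝ *ᵥ v = μ • v)
    (hd : ∀ x, v x ≠ 0 → (G.degree x : ℝ) = d) :
    Aalpha G α *ᵥ v = (α * d + (1 - α) * μ) • v := by
  rw [Aalpha_eq, add_mulVec, smul_mulVec, smul_mulVec, hv]
  ext x
  rw [Pi.add_apply, Pi.smul_apply, mulVec_diagonal]
  by_cases hx : v x = 0
  · simp [hx]
  · simp [hd x hx]; ring

theorem adjMatrix_mulVec_single_sub_single_of_twins {p q : V} (hpq : G.Adj p q)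
    (htwin : ∀ x, x ≠ p → x ≠ q → (G.Adj x p ↔ G.Adj x q)) :
    G.adjMatrix ℝ *ᵥ (Pi.single p 1 - Pi.single q 1) = -(Pi.single p 1 - Pi.single q 1) := by
  ext x
  rw [mulVec_sub, mulVec_single_one, mulVec_single_one]
  by_cases hxp : x = p
  · subst hxp; simp [hpq, hpq.ne]
  by_cases hxq : x = q
  · subst hxq; simp [hpq.symm, hpq.ne.symm]
  simp [htwin x hxp hxq, hxp, hxq]

theorem Aalpha_mulVec_single_sub_single_of_twins {α d : ℝ} {p q : V} (hpq : G.Adj p q)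
    (htwin : ∀ x, x ≠ p → x ≠ q → (G.Adj x p ↔ G.Adj x q))
    (hp : (G.degree p : ℝ) = d) (hq : (G.degree q : ℝ) = d) :
    Aalpha G α *ᵥ (Pi.single p 1 - Pi.single q 1) =
      (α * d - (1 - α)) • (Pi.single p 1 - Pi.single q 1) := by
  rw [Aalpha_mulVec_eq_smul (μ := -1) (d := d)]
  · ring_nf
  · rw [adjMatrix_mulVec_single_sub_single_of_twins hpq htwin, neg_one_smul]
  · intro x hx
    by_cases hxp : x = p
    · rwa [hxp]
    by_cases hxq : x = q
    · rwa [hxq]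
    simp [hxp, hxq] at hx

end Aalpha

namespace QuaternionGroup

variable {n : ℕ}

theorem natCast_add_self : (n : ZMod (2 * n)) + n = 0 := by
  rw [← two_mul, ← ZMod.natCast_self (2 * n), Nat.cast_mul, Nat.cast_ofNat]

theorem natCast_add_natCast_add_cancel (i : ZMod (2 * n)) : (n : ZMod (2 * n)) + (n + i) = i := by
  rw [← add_assoc, natCast_add_self, zero_add]

theorem eq_natCast_add_comm {i j : ZMod (2 * n)} : i = n + j ↔ j = n + i := by
  constructor <;> rintro rfl <;> rw [natCast_add_natCast_add_cancel]

theorem natCast_ne_zero [NeZero n] : (n : ZMod (2 * n)) ≠ 0 := by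
  rw [Ne, ZMod.natCast_eq_zero_iff]
  exact fun h => (Nat.le_of_dvd (NeZero.pos n) h).not_gt (by linarith [NeZero.pos n])

theorem natCast_ne_natCast_add {j k : ℕ} (hj : j < n) (hk : k < n) :
    (k : ZMod (2 * n)) ≠ n + j := by
  rw [← Nat.cast_add, Ne, ZMod.natCast_eq_natCast_iff', Nat.mod_eq_of_lt (by omega),
    Nat.mod_eq_of_lt (by omega)]
  omega

theorem natCast_injective_fin : Function.Injective fun k : Fin n => (k : ZMod (2 * n)) := by
  intro j k h
  simp only [ZMod.natCast_eq_natCast_iff', Nat.mod_eq_of_lt (by omega : (j : ℕ) < 2 * n),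
    Nat.mod_eq_of_lt (by omega : (k : ℕ) < 2 * n)] at h
  exact Fin.ext h

theorem a_pow (i : ZMod (2 * n)) (k : ℕ) : a i ^ k = a ((k : ZMod (2 * n)) * i) := by
  induction k with
  | zero => simp
  | succ k ih => rw [pow_succ, ih, a_mul_a, Nat.cast_succ, add_one_mul]

theorem xa_pow_three (i : ZMod (2 * n)) : xa i ^ 3 = xa ((n : ZMod (2 * n)) + i) := by
  rw [pow_succ, xa_sq, a_mul_xa, sub_eq_add_neg, add_comm, ← zero_sub,
    ← natCast_add_self, add_sub_cancel_right]

theorem xa_pow_eq (i : ZMod (2 * n)) (k : ℕ) :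
    xa i ^ k = 1 ∨ xa i ^ k = xa i ∨ xa i ^ k = a n ∨
      xa i ^ k = xa ((n : ZMod (2 * n)) + i) := by
  rw [← Nat.div_add_mod k 4, pow_add, pow_mul, xa_pow_four, one_pow, one_mul]
  have : k % 4 < 4 := Nat.mod_lt k (by norm_num)
  interval_cases k % 4
  · simp
  · simp
  · simp [xa_sq]
  · simp [xa_pow_three]

theorem powerGraph_adj_a_a {m : ℕ} (hn : n = 2 ^ m) {i j : ZMod (2 * n)} :
    (powerGraph (QuaternionGroup n)).Adj (a i) (a j) ↔ i ≠ j := by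
  have : NeZero (2 * n) := ⟨by simp [hn]⟩
  have hpow : ∀ {i j : ZMod (2 * n)}, (∃ c, c * i = j) → ∃ k, 0 < k ∧ a j = a i ^ k := by
    rintro i j ⟨c, rfl⟩
    -- the exponent `c.val` itself may be `0`, which the power graph does not allow
    refine ⟨c.val + 2 * n, by simp [hn], ?_⟩
    rw [a_pow, Nat.cast_add, ZMod.natCast_self, add_zero, ZMod.natCast_zmod_val]
  rw [powerGraph, SimpleGraph.fromRel_adj, Ne, a.injEq]
  refine ⟨And.left, fun h => ⟨h, ?_⟩⟩
  exact (ZMod.exists_mul_eq_or_of_prime_pow Nat.prime_two (by rw [hn, pow_succ']) i j).imp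
    hpow hpow

theorem powerGraph_adj_a_xa {i j : ZMod (2 * n)} :
    (powerGraph (QuaternionGroup n)).Adj (a i) (xa j) ↔ i = 0 ∨ i = n := by
  rw [powerGraph, SimpleGraph.fromRel_adj]
  constructor
  · rintro ⟨-, ⟨k, -, h⟩ | ⟨k, -, h⟩⟩
    · simp [a_pow] at h
    · rcases xa_pow_eq j k with h' | h' | h' | h' <;> simp_all [one_def, -a_zero]
  · rintro (rfl | rfl)
    · exact ⟨by simp [-a_zero], .inr ⟨4, by norm_num, by rw [xa_pow_four, one_def]⟩⟩
    · exact ⟨by simp, .inr ⟨2, by norm_num, (xa_sq j).symm⟩⟩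

theorem powerGraph_adj_xa_a {i j : ZMod (2 * n)} :
    (powerGraph (QuaternionGroup n)).Adj (xa i) (a j) ↔ j = 0 ∨ j = n :=
  SimpleGraph.adj_comm _ _ _ |>.trans powerGraph_adj_a_xa

theorem powerGraph_adj_xa_xa [NeZero n] {i j : ZMod (2 * n)} :
    (powerGraph (QuaternionGroup n)).Adj (xa i) (xa j) ↔ j = n + i := by
  rw [powerGraph, SimpleGraph.fromRel_adj]
  constructor
  · rintro ⟨hne, ⟨k, -, h⟩ | ⟨k, -, h⟩⟩
    · rcases xa_pow_eq i k with h' | h' | h' | h' <;> simp_all [one_def, -a_zero]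
    · rcases xa_pow_eq j k with h' | h' | h' | h' <;> simp_all [one_def, -a_zero]
      rw [natCast_add_natCast_add_cancel]
  · rintro rfl
    refine ⟨?_, .inl ⟨3, by norm_num, (xa_pow_three i).symm⟩⟩
    simpa [eq_comm (a := i)] using natCast_ne_zero (n := n)

section Degree

variable [NeZero n] [DecidableRel (powerGraph (QuaternionGroup n)).Adj]

theorem degree_xa (i : ZMod (2 * n)) : (powerGraph (QuaternionGroup n)).degree (xa i) = 3 := by
  have : (powerGraph (QuaternionGroup n)).neighborFinset (xa i) =
      {a 0, a n, xa ((n : ZMod (2 * n)) + i)} := by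
    ext (j | j) <;> simp [powerGraph_adj_xa_a, powerGraph_adj_xa_xa, -a_zero]
  rw [← SimpleGraph.card_neighborFinset_eq_degree, this, Finset.card_insert_of_notMem,
    Finset.card_pair (by simp)]
  simpa [-a_zero] using (natCast_ne_zero (n := n)).symm

theorem degree_a_of_central {m : ℕ} (hn : n = 2 ^ m) {i : ZMod (2 * n)}
    (hi : i = 0 ∨ i = n) : (powerGraph (QuaternionGroup n)).degree (a i) = 4 * n - 1 := by
  rw [← QuaternionGroup.card, SimpleGraph.degree_eq_card_sub_one]
  rintro (j | j) hne
  · exact (powerGraph_adj_a_a hn).2 (by simpa using hne)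
  · exact powerGraph_adj_a_xa.2 hi

theorem degree_a_of_noncentral {m : ℕ} (hn : n = 2 ^ m) {i : ZMod (2 * n)}
    (hi₀ : i ≠ 0) (hiₙ : i ≠ n) : (powerGraph (QuaternionGroup n)).degree (a i) = 2 * n - 1 := by
  have : (powerGraph (QuaternionGroup n)).neighborFinset (a i) =
      (Finset.univ.erase i).image a := by
    ext (j | j) <;> simp [powerGraph_adj_a_a hn, powerGraph_adj_a_xa, hi₀, hiₙ, eq_comm]
  rw [← SimpleGraph.card_neighborFinset_eq_degree, this,
    Finset.card_image_of_injective _ fun _ _ => a.inj,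
    Finset.card_erase_of_mem (Finset.mem_univ i), Finset.card_univ, ZMod.card]

end Degree

theorem adjMatrix_mulVec_single_xa [NeZero n]
    [DecidableRel (powerGraph (QuaternionGroup n)).Adj] (i : ZMod (2 * n)) :
    (powerGraph (QuaternionGroup n)).adjMatrix ℝ *ᵥ Pi.single (xa i) 1 =
      Pi.single (a 0) 1 + Pi.single (a n) 1 + Pi.single (xa ((n : ZMod (2 * n)) + i)) 1 := by
  have := (natCast_ne_zero (n := n)).symm
  ext (j | j)
  · by_cases hj : j = 0 <;> simp [powerGraph_adj_a_xa, Pi.single_apply, hj, this, -a_zero]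
  · simp [powerGraph_adj_xa_xa, Pi.single_apply, eq_natCast_add_comm, -a_zero]

theorem powerGraph_adj_a_iff_adj_a {m : ℕ} (hn : n = 2 ^ m) {i j : ZMod (2 * n)}
    (hij : (i = 0 ∨ i = n) ↔ (j = 0 ∨ j = n)) (x : QuaternionGroup n) (hi : x ≠ a i)
    (hj : x ≠ a j) :
    (powerGraph (QuaternionGroup n)).Adj x (a i) ↔
      (powerGraph (QuaternionGroup n)).Adj x (a j) := by
  rcases x with k | k
  · simp_all [powerGraph_adj_a_a hn]
  · simpa [powerGraph_adj_xa_a] using hij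

theorem isEigenvalue_Aalpha_powerGraph [NeZero n] {m : ℕ} (hn : n = 2 ^ m) (α : ℝ) :
    (Aalpha (powerGraph (QuaternionGroup n)) α).IsEigenvalue (4 * α * n - 1) := by
  classical
  have hN := natCast_ne_zero (n := n)
  have hdeg : ∀ i : ZMod (2 * n), (i = 0 ∨ i = n) →
      ((powerGraph (QuaternionGroup n)).degree (a i) : ℝ) = 4 * n - 1 := fun i hi => by
    rw [degree_a_of_central hn hi, Nat.cast_sub (by have := NeZero.pos n; omega)]
    push_cast; ring
  refine ⟨Pi.single (a 0) 1 - Pi.single (a n) 1, fun h => ?_, ?_⟩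
  · simpa [Pi.single_apply, hN.symm, -a_zero] using congrFun h (a 0)
  · rw [Aalpha_mulVec_single_sub_single_of_twins ((powerGraph_adj_a_a hn).2 hN.symm)
      (powerGraph_adj_a_iff_adj_a hn (by simp)) (hdeg 0 (.inl rfl))
      (hdeg n (.inr rfl))]
    ring_nf

theorem two_mul_sub_three_le_eigMult_Aalpha_powerGraph [NeZero n] {m : ℕ} (hn : n = 2 ^ m)
    (hn₁ : 1 < n) (α : ℝ) :
    2 * n - 3 ≤ eigMult (Aalpha (powerGraph (QuaternionGroup n)) α) (2 * α * n - 1) := by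
  classical
  have h1N : (1 : ZMod (2 * n)) ≠ n := by
    rw [← Nat.cast_one, Ne, ZMod.natCast_eq_natCast_iff', Nat.mod_eq_of_lt (by omega),
      Nat.mod_eq_of_lt (by omega)]
    omega
  have h10 : (1 : ZMod (2 * n)) ≠ 0 := by
    have : Fact (1 < 2 * n) := ⟨by omega⟩
    exact one_ne_zero
  have hdeg : ∀ i : ZMod (2 * n), i ≠ 0 → i ≠ n →
      ((powerGraph (QuaternionGroup n)).degree (a i) : ℝ) = 2 * n - 1 := fun i hi₀ hiₙ => by
    rw [degree_a_of_noncentral hn hi₀ hiₙ, Nat.cast_sub (by omega)]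
    push_cast; ring
  let s : Finset (ZMod (2 * n)) := Finset.univ \ {0, 1, (n : ZMod (2 * n))}
  have hs : ∀ z ∈ s, z ≠ 0 ∧ z ≠ 1 ∧ z ≠ n := by simp [s]
  calc 2 * n - 3 ≤ Fintype.card s := by
        have := Finset.le_card_sdiff {0, 1, (n : ZMod (2 * n))} Finset.univ
        have := Finset.card_le_three (a := (0 : ZMod (2 * n))) (b := 1) (c := n)
        rw [Finset.card_univ, ZMod.card] at *
        simp only [Fintype.card_coe, s]
        omega
    _ ≤ _ := card_le_eigMult (w := fun z : s => Pi.single (a z) 1 - Pi.single (a 1) 1) ?_ ?_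
  · rintro ⟨z, hz⟩
    obtain ⟨hz₀, hz₁, hzₙ⟩ := hs z hz
    rw [Aalpha_mulVec_single_sub_single_of_twins ((powerGraph_adj_a_a hn).2 hz₁)
      (powerGraph_adj_a_iff_adj_a hn (by simp [hz₀, hzₙ, h10, h1N]))
      (hdeg z hz₀ hzₙ) (hdeg 1 h10 h1N)]
    ring_nf
  · refine linearIndependent_of_apply_eq_ite (fun z : s => a z) fun ⟨z, hz⟩ ⟨z', _⟩ => ?_
    simp [Pi.single_apply, (hs z hz).2.1]

theorem Aalpha_powerGraph_mulVec_eq_smul_of_apply_a [NeZero n]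
    [DecidableRel (powerGraph (QuaternionGroup n)).Adj] {α μ : ℝ} {v : QuaternionGroup n → ℝ}
    (hv : (powerGraph (QuaternionGroup n)).adjMatrix ℝ *ᵥ v = μ • v) (ha : ∀ i, v (a i) = 0) :
    Aalpha (powerGraph (QuaternionGroup n)) α *ᵥ v = (3 * α + (1 - α) * μ) • v := by
  rw [mul_comm 3 α]
  refine Aalpha_mulVec_eq_smul hv ?_
  rintro (i | i) hi
  · exact absurd (ha i) hi
  · rw [degree_xa, Nat.cast_ofNat]

theorem le_eigMult_Aalpha_powerGraph_four_mul_sub_one [NeZero n] (α : ℝ) :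
    n ≤ eigMult (Aalpha (powerGraph (QuaternionGroup n)) α) (4 * α - 1) := by
  classical
  let w (k : Fin n) : QuaternionGroup n → ℝ :=
    Pi.single (xa (k : ℕ)) 1 -
      Pi.single (xa ((n : ZMod (2 * n)) + ((k : ℕ) : ZMod (2 * n)))) 1
  calc n = Fintype.card (Fin n) := (Fintype.card_fin n).symm
    _ ≤ _ := card_le_eigMult (w := w) (fun k => ?_) ?_
  · rw [Aalpha_powerGraph_mulVec_eq_smul_of_apply_a (μ := -1) ?_ (by simp [w])]
    · ring_nf
    · simp only [w, mulVec_sub, adjMatrix_mulVec_single_xa, natCast_add_natCast_add_cancel]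
      module
  · refine linearIndependent_of_apply_eq_ite (fun k : Fin n => xa (k : ℕ)) fun k j => ?_
    simp [w, Pi.single_apply, natCast_injective_fin.eq_iff, natCast_ne_natCast_add j.2 k.2]

theorem sub_two_le_eigMult_Aalpha_powerGraph [NeZero n] (α : ℝ) :
    n - 2 ≤ eigMult (Aalpha (powerGraph (QuaternionGroup n)) α) (1 + 2 * α) := by
  classical
  let pair (k : ℕ) : QuaternionGroup n → ℝ :=
    Pi.single (xa (k : ZMod (2 * n))) 1 +
      Pi.single (xa ((n : ZMod (2 * n)) + (k : ZMod (2 * n)))) 1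
  let w (k : {k : Fin n // k ≠ 0}) : QuaternionGroup n → ℝ := pair k - pair 0
  calc n - 2 ≤ Fintype.card {k : Fin n // k ≠ 0} := by simp; omega
    _ ≤ _ := card_le_eigMult (w := w) (fun k => ?_) ?_
  · rw [Aalpha_powerGraph_mulVec_eq_smul_of_apply_a (μ := 1) ?_ (by simp [w, pair])]
    · ring_nf
    · simp only [w, pair, mulVec_sub, mulVec_add, adjMatrix_mulVec_single_xa,
        natCast_add_natCast_add_cancel]
      module
  · refine linearIndependent_of_apply_eq_ite (fun k : {k : Fin n // k ≠ 0} => xa (k : ℕ))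
      fun k j => ?_
    have hk₀ : ((k : ℕ) : ZMod (2 * n)) ≠ 0 := by simpa using natCast_injective_fin.ne k.2
    have hkₙ : ((k : ℕ) : ZMod (2 * n)) ≠ n := by
      simpa using natCast_ne_natCast_add (NeZero.pos n) k.1.2
    simp [w, pair, Pi.single_apply, natCast_injective_fin.eq_iff, Subtype.ext_iff, hk₀, hkₙ,
      natCast_ne_natCast_add j.1.2 k.1.2]

end QuaternionGroup

theorem stmt_19_general {α : ℝ}
    (m n : ℕ) (hm : 1 ≤ m) (hn : n = 2 ^ m) [NeZero n] :
    Matrix.IsEigenvalue (Aalpha (powerGraph (QuaternionGroup n)) α)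
      (4 * α * (n : ℝ) - 1) ∧
    2 * n - 3 ≤ eigMult (Aalpha (powerGraph (QuaternionGroup n)) α)
      (2 * α * (n : ℝ) - 1) ∧
    n ≤ eigMult (Aalpha (powerGraph (QuaternionGroup n)) α) (4 * α - 1) ∧
    n - 2 ≤ eigMult (Aalpha (powerGraph (QuaternionGroup n)) α) (1 + 2 * α) := by
  have hn₁ : 1 < n := hn ▸ Nat.one_lt_two_pow (by omega)
  exact ⟨isEigenvalue_Aalpha_powerGraph hn α,
    two_mul_sub_three_le_eigMult_Aalpha_powerGraph hn hn₁ α,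
    le_eigMult_Aalpha_powerGraph_four_mul_sub_one α, sub_two_le_eigMult_Aalpha_powerGraph α⟩

/-- eigenvalues of the power graph of the generalized quaternion
(dicyclic) group `Q_n` of order `4n`, where `n = 2^m`. -/
theorem stmt_19 {α : ℝ} (hα : α ∈ Set.Icc (0 : ℝ) 1)
    (m n : ℕ) (hm : 1 ≤ m) (hn : n = 2 ^ m) [NeZero n] :
    Matrix.IsEigenvalue (Aalpha (powerGraph (QuaternionGroup n)) α)
      (4 * α * (n : ℝ) - 1) ∧
    2 * n - 3 ≤ eigMult (Aalpha (powerGraph (QuaternionGroup n)) α)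
      (2 * α * (n : ℝ) - 1) ∧
    n ≤ eigMult (Aalpha (powerGraph (QuaternionGroup n)) α) (4 * α - 1) ∧
    n - 2 ≤ eigMult (Aalpha (powerGraph (QuaternionGroup n)) α) (1 + 2 * α) :=
  stmt_19_general m n hm hn
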